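/- arXiv:1601.00957 — 3 statements merged into one kernel-verified Lean document; each statement's English description precedes it below -/
import Mathlib

section
/- Fix 0 ≤ γ < 3, λ > 0, X₀ ∈ ℝⁿ, and r ≥ 0. Set α = 4/(3-γ) and τ = (λ(3-γ)^4/(64(1+γ)))^{1/(3-γ)}. Define u(X) = τ · (max(|X - X₀| - r, 0))^α. Then for every X with |X - X₀| > r, u is twice differentiable at X and satisfies Δ_∞ u(X) = λ · u(X)^γ, and for every X with |X - X₀| < r, u is differentiable at X with ∇u(X) = 0 and u(X) = 0. -/
/-!
For a radial function `u = f(|X - X₀|)` and `ρ = |X - X₀| > 0`, the gradient is `f'(ρ) e` with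
`e = (X - X₀)/ρ`, and `e` is an eigenvector of `D²u` with eigenvalue `f''(ρ)`: along the ray
`X + t (X - X₀)` the gradient is `f'((1 + t) ρ) e`. Hence `Δ_∞ u = f'(ρ)² f''(ρ)`, and the profile
`f(ρ) = τ (ρ - r)^α` turns this into `λ f(ρ)^γ`. Inside the ball `u` vanishes on a neighbourhood.
-/

open scoped RealInnerProductSpace

/-- The infinity Laplacian `Δ_∞ u (X) = ⟨D²u(X) · ∇u(X), ∇u(X)⟩`. -/
noncomputable def infinityLaplacian {n : ℕ} (u : EuclideanSpace ℝ (Fin n) → ℝ)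
    (X : EuclideanSpace ℝ (Fin n)) : ℝ :=
  ⟪fderiv ℝ (gradient u) X (gradient u X), gradient u X⟫

open Filter Topology

section Radial

variable {E : Type*} [NormedAddCommGroup E] [InnerProductSpace ℝ E]

theorem hasGradientAt_norm_sub [CompleteSpace E] {x₀ x : E} (hx : x ≠ x₀) :
    HasGradientAt (fun y => ‖y - x₀‖) (‖x - x₀‖⁻¹ • (x - x₀)) x := by
  have hρ : ‖x - x₀‖ ≠ 0 := norm_ne_zero_iff.2 (sub_ne_zero.2 hx)
  have h := ((hasFDerivAt_id x).sub_const x₀).norm_sq.sqrt (pow_ne_zero 2 hρ)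
  simp only [Real.sqrt_sq (norm_nonneg _)] at h
  rw [hasGradientAt_iff_hasFDerivAt]
  refine h.congr_fderiv ?_
  ext v
  simp [field]

theorem HasDerivAt.hasGradientAt_comp_norm_sub [CompleteSpace E] {f : ℝ → ℝ} {f' : ℝ} {x₀ x : E}
    (hf : HasDerivAt f f' ‖x - x₀‖) (hx : x ≠ x₀) :
    HasGradientAt (fun y => f ‖y - x₀‖) ((f' / ‖x - x₀‖) • (x - x₀)) x := by
  have h := hf.comp_hasFDerivAt x (hasGradientAt_norm_sub hx).hasFDerivAt
  rw [hasGradientAt_iff_hasFDerivAt]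
  refine h.congr_fderiv ?_
  ext v
  simp [field]

noncomputable def radialField (φ : ℝ → ℝ) (x₀ y : E) : E :=
  (φ ‖y - x₀‖ / ‖y - x₀‖) • (y - x₀)

theorem differentiableAt_radialField {φ : ℝ → ℝ} {x₀ x : E} (hx : x ≠ x₀)
    (hφ : DifferentiableAt ℝ φ ‖x - x₀‖) : DifferentiableAt ℝ (radialField φ x₀) x := by
  have hsub : DifferentiableAt ℝ (fun y : E => y - x₀) x := differentiableAt_id.sub_const x₀
  have hρ : ‖x - x₀‖ ≠ 0 := norm_ne_zero_iff.2 (sub_ne_zero.2 hx)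
  exact ((hφ.div differentiableAt_id hρ).comp x (hsub.norm ℝ (sub_ne_zero.2 hx))).smul hsub

theorem radialField_add_smul_sub {φ : ℝ → ℝ} {x₀ x : E} {t : ℝ} (ht : 0 < 1 + t) :
    radialField φ x₀ (x + t • (x - x₀)) = (φ ((1 + t) * ‖x - x₀‖) / ‖x - x₀‖) • (x - x₀) := by
  have hray : x + t • (x - x₀) - x₀ = (1 + t) • (x - x₀) := by module
  rw [radialField, hray, norm_smul, Real.norm_of_nonneg ht.le, smul_smul]
  congr 1
  field_simp

theorem fderiv_radialField_apply_sub {φ : ℝ → ℝ} {φ' : ℝ} {x₀ x : E} (hx : x ≠ x₀)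
    (hφ : HasDerivAt φ φ' ‖x - x₀‖) :
    fderiv ℝ (radialField φ x₀) x (x - x₀) = φ' • (x - x₀) := by
  set ρ := ‖x - x₀‖
  have hρ : ρ ≠ 0 := norm_ne_zero_iff.2 (sub_ne_zero.2 hx)
  have hline : HasDerivAt (fun t : ℝ => x + t • (x - x₀)) (x - x₀) 0 := by
    simpa using ((hasDerivAt_id (0 : ℝ)).smul_const (x - x₀)).const_add x
  have hchain := (differentiableAt_radialField hx hφ.differentiableAt).hasFDerivAt
    |>.comp_hasDerivAt_of_eq (0 : ℝ) hline (by simp)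
  have hscale : HasDerivAt (fun t : ℝ => (1 + t) * ρ) ρ 0 := by
    simpa using ((hasDerivAt_id (0 : ℝ)).const_add 1).mul_const ρ
  have hφray : HasDerivAt (fun t : ℝ => φ ((1 + t) * ρ)) (φ' * ρ) 0 := by
    refine HasDerivAt.comp (0 : ℝ) (h₂ := φ) ?_ hscale
    simpa using hφ
  have hray : HasDerivAt (fun t : ℝ => (φ ((1 + t) * ρ) / ρ) • (x - x₀)) (φ' • (x - x₀)) 0 := by
    convert (hφray.div_const ρ).smul_const (x - x₀) using 2
    field_simp
  refine hchain.unique (hray.congr_of_eventuallyEq ?_)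
  filter_upwards [lt_mem_nhds (show (-1 : ℝ) < 0 by norm_num)] with t ht
  exact radialField_add_smul_sub (by linarith)

section Gradient

variable [CompleteSpace E] {f f' : ℝ → ℝ} {x₀ x : E}

theorem gradient_comp_norm_sub_eventuallyEq (hx : x ≠ x₀)
    (hf : ∀ᶠ ρ in 𝓝 ‖x - x₀‖, HasDerivAt f (f' ρ) ρ) :
    gradient (fun y => f ‖y - x₀‖) =ᶠ[𝓝 x] radialField f' x₀ := by
  have hnorm : Tendsto (fun y : E => ‖y - x₀‖) (𝓝 x) (𝓝 ‖x - x₀‖) :=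
    ((continuous_id.sub continuous_const).norm).tendsto x
  filter_upwards [hnorm.eventually hf, eventually_ne_nhds hx] with y hy hy₀
  exact (hy.hasGradientAt_comp_norm_sub hy₀).gradient

theorem differentiableAt_gradient_comp_norm_sub (hx : x ≠ x₀)
    (hf : ∀ᶠ ρ in 𝓝 ‖x - x₀‖, HasDerivAt f (f' ρ) ρ) (hf' : DifferentiableAt ℝ f' ‖x - x₀‖) :
    DifferentiableAt ℝ (gradient fun y => f ‖y - x₀‖) x :=
  (gradient_comp_norm_sub_eventuallyEq hx hf).differentiableAt_iff.2
    (differentiableAt_radialField hx hf')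

theorem inner_fderiv_gradient_comp_norm_sub {f'' : ℝ} (hx : x ≠ x₀)
    (hf : ∀ᶠ ρ in 𝓝 ‖x - x₀‖, HasDerivAt f (f' ρ) ρ) (hf' : HasDerivAt f' f'' ‖x - x₀‖) :
    ⟪fderiv ℝ (gradient fun y => f ‖y - x₀‖) x (gradient (fun y => f ‖y - x₀‖) x),
      gradient (fun y => f ‖y - x₀‖) x⟫ = f' ‖x - x₀‖ ^ 2 * f'' := by
  have hgrad := gradient_comp_norm_sub_eventuallyEq hx hf
  have hρ : ‖x - x₀‖ ≠ 0 := norm_ne_zero_iff.2 (sub_ne_zero.2 hx)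
  rw [hgrad.fderiv_eq, hgrad.eq_of_nhds, radialField, map_smul,
    fderiv_radialField_apply_sub hx hf', inner_smul_left, inner_smul_right, inner_smul_left,
    real_inner_self_eq_norm_sq]
  simp only [conj_trivial]
  field_simp

end Gradient

theorem hasDerivAt_mul_rpow_sub (c p : ℝ) {r ρ : ℝ} (hρ : r < ρ) :
    HasDerivAt (fun s => c * (s - r) ^ p) (c * p * (ρ - r) ^ (p - 1)) ρ := by
  have h := ((hasDerivAt_id ρ).sub_const r).rpow_const (p := p) (Or.inl (sub_pos.2 hρ).ne')
  simpa [mul_assoc] using h.const_mul c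

noncomputable def deadCoreProfile (τ α r ρ : ℝ) : ℝ := τ * max (ρ - r) 0 ^ α

section DeadCoreProfile

variable {τ α r ρ : ℝ}

theorem deadCoreProfile_of_le (hα : α ≠ 0) (hρ : ρ ≤ r) : deadCoreProfile τ α r ρ = 0 := by
  rw [deadCoreProfile, max_eq_right (sub_nonpos.2 hρ), Real.zero_rpow hα, mul_zero]

theorem deadCoreProfile_of_lt (hρ : r < ρ) : deadCoreProfile τ α r ρ = τ * (ρ - r) ^ α := by
  rw [deadCoreProfile, max_eq_left (sub_nonneg.2 hρ.le)]

theorem hasDerivAt_deadCoreProfile (hρ : r < ρ) :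
    HasDerivAt (deadCoreProfile τ α r) (τ * α * (ρ - r) ^ (α - 1)) ρ :=
  (hasDerivAt_mul_rpow_sub τ α hρ).congr_of_eventuallyEq
    ((lt_mem_nhds hρ).mono fun _ hs => deadCoreProfile_of_lt hs)

/-- The exponents match because `3α - 4 = αγ`, the constants because `τ^(3 - γ) α³ (α - 1) = λ`. -/
theorem deadCoreProfile_ode {γ lam p : ℝ} (hγ1 : -1 < γ) (hγ3 : γ ≠ 3) (hlam : 0 ≤ lam)
    (hp : 0 < p) (hα : α = 4 / (3 - γ))
    (hτ : τ = (lam * (3 - γ) ^ 4 / (64 * (1 + γ))) ^ ((1 : ℝ) / (3 - γ))) :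
    (τ * α * p ^ (α - 1)) ^ 2 * (τ * α * (α - 1) * p ^ (α - 1 - 1)) = lam * (τ * p ^ α) ^ γ := by
  have h3γ : 3 - γ ≠ 0 := sub_ne_zero.2 hγ3.symm
  have h1γ : 0 < 1 + γ := by linarith
  set K := lam * (3 - γ) ^ 4 / (64 * (1 + γ)) with hK
  have hK0 : 0 ≤ K := by positivity
  have hτ0 : 0 ≤ τ := hτ ▸ Real.rpow_nonneg hK0 _
  have hτK : τ ^ (3 - γ) = K := by
    rw [hτ, ← Real.rpow_mul hK0, one_div, inv_mul_cancel₀ h3γ, Real.rpow_one]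
  have hτ3 : τ * τ * τ = τ ^ γ * K := by
    rw [← hτK, ← Real.rpow_add' hτ0 (by norm_num), add_sub_cancel]
    norm_cast
    ring
  have hp3 : p ^ (α - 1) * p ^ (α - 1) * p ^ (α - 1 - 1) = p ^ (α * γ) := by
    rw [← Real.rpow_add hp, ← Real.rpow_add hp, hα]
    congr 1
    field_simp
    ring
  have hKα : K * (α * α * α * (α - 1)) = lam := by
    rw [hK, hα]
    field_simp
    ring
  calc (τ * α * p ^ (α - 1)) ^ 2 * (τ * α * (α - 1) * p ^ (α - 1 - 1))
      = τ * τ * τ * (α * α * α * (α - 1)) * (p ^ (α - 1) * p ^ (α - 1) * p ^ (α - 1 - 1)) := by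
        ring
    _ = lam * (τ ^ γ * p ^ (α * γ)) := by rw [hτ3, hp3, ← hKα]; ring
    _ = lam * (τ * p ^ α) ^ γ := by
        rw [Real.mul_rpow hτ0 (Real.rpow_nonneg hp.le _),
          ← Real.rpow_mul hp.le]

end DeadCoreProfile

theorem dead_core_radial_solution
    {n : ℕ} (γ lam α τ r : ℝ) (hγ0 : 0 ≤ γ) (hγ3 : γ < 3) (hlam : 0 < lam)
    (hr : 0 ≤ r)
    (hα : α = 4 / (3 - γ))
    (hτ : τ = (lam * (3 - γ) ^ 4 / (64 * (1 + γ))) ^ ((1 : ℝ) / (3 - γ)))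
    (X₀ : EuclideanSpace ℝ (Fin n))
    (u : EuclideanSpace ℝ (Fin n) → ℝ)
    (hu : ∀ X, u X = τ * (max (‖X - X₀‖ - r) 0) ^ α) :
    (∀ X : EuclideanSpace ℝ (Fin n), r < ‖X - X₀‖ →
      DifferentiableAt ℝ u X ∧ DifferentiableAt ℝ (gradient u) X ∧
        infinityLaplacian u X = lam * (u X) ^ γ) ∧
    (∀ X : EuclideanSpace ℝ (Fin n), ‖X - X₀‖ < r →
      DifferentiableAt ℝ u X ∧ gradient u X = 0 ∧ u X = 0) := by
  obtain rfl : u = fun X => deadCoreProfile τ α r ‖X - X₀‖ := funext hu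
  refine ⟨fun X hX => ?_, fun X hX => ?_⟩
  · have hX₀ : X ≠ X₀ := by
      rintro rfl
      exact (hr.trans_lt hX).ne' (by simp)
    have hf : ∀ᶠ ρ in 𝓝 ‖X - X₀‖,
        HasDerivAt (deadCoreProfile τ α r) (τ * α * (ρ - r) ^ (α - 1)) ρ :=
      (lt_mem_nhds hX).mono fun _ hρ => hasDerivAt_deadCoreProfile hρ
    have hf' := hasDerivAt_mul_rpow_sub (τ * α) (α - 1) hX
    refine ⟨((hasDerivAt_deadCoreProfile hX).hasGradientAt_comp_norm_sub hX₀).differentiableAt,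
      differentiableAt_gradient_comp_norm_sub hX₀ hf hf'.differentiableAt, ?_⟩
    beta_reduce
    rw [infinityLaplacian, inner_fderiv_gradient_comp_norm_sub hX₀ hf hf',
      deadCoreProfile_of_lt hX]
    exact deadCoreProfile_ode (by linarith) hγ3.ne hlam.le (sub_pos.2 hX) hα hτ
  · have hα0 : α ≠ 0 := by rw [hα]; exact div_ne_zero four_ne_zero (sub_pos.2 hγ3).ne'
    have hzero : (fun Y => deadCoreProfile τ α r ‖Y - X₀‖) =ᶠ[𝓝 X] fun _ => 0 :=
      ((continuous_id.sub continuous_const).norm.tendsto X).eventually (gt_mem_nhds hX) |>.mono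
        fun _ hY => deadCoreProfile_of_le hα0 hY.le
    exact ⟨hzero.differentiableAt_iff.2 (differentiableAt_const 0),
      hzero.gradient_eq.trans (gradient_fun_const X 0), hzero.eq_of_nhds⟩
end Radial
end

section
/- Let s, c₀, C, r > 0 with c₀ ≤ C, and suppose points Y, Z ∈ ℝⁿ and a function u : ℝⁿ → ℝ satisfy u(Y) ≥ c₀ r^s and u(Y) ≤ C|Y - Z|^s. Then |Y - Z| ≥ (c₀/C)^{1/s} · r. Consequently, if u is a function such that every point of ∂{u>0} satisfies the growth bound u(X) ≤ C|X - Z|^s for Z ∈ ∂{u>0}, and sup_{B_r(X₀)} u ≥ c₀ r^s is attained at Y₀ ∈ B_r(X₀), then the ball B_{δr}(Y₀) with δ = (c₀/C)^{1/s} is disjoint from ∂{u>0} and contained in {u > 0}. -/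
theorem positive_density_lemma
    {n : ℕ} (s c₀ C r : ℝ) (hs : 0 < s) (hc₀ : 0 < c₀) (hC : 0 < C)
    (hr : 0 < r) (hcC : c₀ ≤ C)
    (u : EuclideanSpace ℝ (Fin n) → ℝ)
    (hcont : Continuous u) (hnonneg : ∀ X, 0 ≤ u X)
    (X₀ Y₀ : EuclideanSpace ℝ (Fin n))
    (hY₀mem : Y₀ ∈ Metric.ball X₀ r)
    (hgrowth : ∀ X Z : EuclideanSpace ℝ (Fin n),
      Z ∈ frontier {X | 0 < u X} → u X ≤ C * ‖X - Z‖ ^ s)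
    (hY₀ : c₀ * r ^ s ≤ u Y₀) :
    (∀ (Y Z : EuclideanSpace ℝ (Fin n)) (v : EuclideanSpace ℝ (Fin n) → ℝ),
      c₀ * r ^ s ≤ v Y → v Y ≤ C * ‖Y - Z‖ ^ s →
        (c₀ / C) ^ ((1 : ℝ) / s) * r ≤ ‖Y - Z‖) ∧
    Metric.ball Y₀ ((c₀ / C) ^ ((1 : ℝ) / s) * r) ∩ frontier {X | 0 < u X} = ∅ ∧
    Metric.ball Y₀ ((c₀ / C) ^ ((1 : ℝ) / s) * r) ⊆ {X | 0 < u X} := by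
  have key : ∀ (Y Z : EuclideanSpace ℝ (Fin n)) (v : EuclideanSpace ℝ (Fin n) → ℝ),
      c₀ * r ^ s ≤ v Y → v Y ≤ C * ‖Y - Z‖ ^ s →
        (c₀ / C) ^ ((1 : ℝ) / s) * r ≤ ‖Y - Z‖ := by
    intro Y Z v h1 h2
    have hle : c₀ / C * r ^ s ≤ ‖Y - Z‖ ^ s := by
      rw [div_mul_eq_mul_div, div_le_iff₀ hC]
      calc c₀ * r ^ s ≤ C * ‖Y - Z‖ ^ s := h1.trans h2
        _ = ‖Y - Z‖ ^ s * C := mul_comm _ _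
    have hrpow : ((c₀ / C) * r ^ s) ^ ((1:ℝ)/s) ≤ (‖Y - Z‖ ^ s) ^ ((1:ℝ)/s) := by
      apply Real.rpow_le_rpow (by positivity) hle (by positivity)
    rwa [Real.mul_rpow (by positivity) (by positivity),
      ← Real.rpow_mul hr.le, ← Real.rpow_mul (norm_nonneg _),
      mul_one_div, div_self hs.ne', Real.rpow_one, Real.rpow_one] at hrpow
  have hδ : 0 < (c₀ / C) ^ ((1 : ℝ) / s) * r := by positivity
  have hopen : IsOpen {X | 0 < u X} := isOpen_lt continuous_const hcont
  have hY₀pos : Y₀ ∈ {X | 0 < u X} := lt_of_lt_of_le (by positivity) hY₀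
  have hdisj : Metric.ball Y₀ ((c₀ / C) ^ ((1 : ℝ) / s) * r) ∩
      frontier {X | 0 < u X} = ∅ := by
    ext Z
    simp only [Set.mem_inter_iff, Metric.mem_ball, Set.mem_empty_iff_false, iff_false,
      not_and]
    intro hZball hZfr
    have := key Y₀ Z u hY₀ (hgrowth Y₀ Z hZfr)
    rw [dist_eq_norm, norm_sub_rev] at hZball
    linarith
  refine ⟨key, hdisj, ?_⟩
  have hsub : Metric.ball Y₀ ((c₀ / C) ^ ((1 : ℝ) / s) * r) ⊆
      {X | 0 < u X} ∪ (closure {X | 0 < u X})ᶜ := by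
    intro x hx
    by_cases hxS : x ∈ {X | 0 < u X}
    · exact Or.inl hxS
    · right
      intro hxc
      have hxfr : x ∈ frontier {X | 0 < u X} := by
        rw [frontier, hopen.interior_eq]
        exact ⟨hxc, hxS⟩
      have : x ∈ Metric.ball Y₀ ((c₀ / C) ^ ((1 : ℝ) / s) * r) ∩
          frontier {X | 0 < u X} := ⟨hx, hxfr⟩
      rw [hdisj] at this
      exact this
  exact (convex_ball Y₀ _).isPreconnected.subset_left_of_subset_union hopen
    isClosed_closure.isOpen_compl
    (Set.disjoint_compl_right_iff_subset.mpr subset_closure) hsub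
    ⟨Y₀, Metric.mem_ball_self hδ, hY₀pos⟩
end

section
/- Let μ > 0 and let h(X) = μ|X|^{4/(3-γ)} with 0 ≤ γ < 3. If μ > τ := ((3-γ)^4/(64(1+γ)))^{1/(3-γ)}, then at every X ≠ 0, Δ_∞ h(X) > h(X)^γ; if μ < τ then Δ_∞ h(X) < h(X)^γ; and if μ = τ then Δ_∞ h(X) = h(X)^γ. -/
/-!
Away from the origin the gradient of `u = ν ‖x‖ ^ p` is the radial field `ν p ‖x‖ ^ (p - 2) x`,
and differentiating it along itself gives `Δ_∞ u = ν³ p³ (p - 1) ‖x‖ ^ (3p - 4)`. For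
`p = 4 / (3 - γ)` the exponent `3p - 4` equals `pγ`, and `τ ^ (3 - γ) p³ (p - 1) = 1`, so
`Δ_∞ h = (μ / τ) ^ (3 - γ) h ^ γ`: the trichotomy is the comparison of `μ / τ` with `1`.
-/

open scoped RealInnerProductSpace Topology

section NormRpow

variable {E : Type*} [NormedAddCommGroup E] [InnerProductSpace ℝ E] {x : E}

theorem hasFDerivAt_norm_rpow_of_ne_zero (hx : x ≠ 0) (p : ℝ) :
    HasFDerivAt (fun y : E ↦ ‖y‖ ^ p) ((p * ‖x‖ ^ (p - 2)) • innerSL ℝ x) x := by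
  have hsq : (fun y : E ↦ (‖y‖ ^ 2) ^ (p / 2)) = fun y ↦ ‖y‖ ^ p := by
    ext y
    rw [← Real.rpow_natCast, ← Real.rpow_mul (norm_nonneg y)]
    ring_nf
  have := ((hasStrictFDerivAt_norm_sq x).rpow_const (p := p / 2) (by simp [hx])).hasFDerivAt
  rw [hsq] at this
  refine this.congr_fderiv ?_
  have hx2 : (‖x‖ ^ 2) ^ (p / 2 - 1) = ‖x‖ ^ (p - 2) := by
    rw [← Real.rpow_natCast, ← Real.rpow_mul (norm_nonneg x)]
    ring_nf
  ext y
  simp [hx2]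
  ring

theorem hasFDerivAt_norm_rpow_smul (hx : x ≠ 0) (q : ℝ) :
    HasFDerivAt (fun y : E ↦ ‖y‖ ^ q • y)
      (‖x‖ ^ q • ContinuousLinearMap.id ℝ E +
        ((q * ‖x‖ ^ (q - 2)) • innerSL ℝ x).smulRight x) x :=
  (hasFDerivAt_norm_rpow_of_ne_zero hx q).smul (hasFDerivAt_id x)

variable [CompleteSpace E]

theorem hasGradientAt_const_mul_norm_rpow (hx : x ≠ 0) (ν p : ℝ) :
    HasGradientAt (fun y : E ↦ ν * ‖y‖ ^ p) ((ν * p) • ‖x‖ ^ (p - 2) • x) x := by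
  rw [hasGradientAt_iff_hasFDerivAt]
  refine ((hasFDerivAt_norm_rpow_of_ne_zero hx p).const_mul ν).congr_fderiv ?_
  ext y
  simp
  ring

theorem gradient_const_mul_norm_rpow_eventuallyEq (hx : x ≠ 0) (ν p : ℝ) :
    gradient (fun y : E ↦ ν * ‖y‖ ^ p) =ᶠ[𝓝 x] fun y ↦ (ν * p) • ‖y‖ ^ (p - 2) • y :=
  Filter.eventually_of_mem (isOpen_ne.mem_nhds hx) fun _ hy ↦
    (hasGradientAt_const_mul_norm_rpow hy ν p).gradient

theorem inner_fderiv_gradient_const_mul_norm_rpow (hx : x ≠ 0) (ν p : ℝ) :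
    ⟪fderiv ℝ (gradient fun y : E ↦ ν * ‖y‖ ^ p) x (gradient (fun y : E ↦ ν * ‖y‖ ^ p) x),
      gradient (fun y : E ↦ ν * ‖y‖ ^ p) x⟫ = ν ^ 3 * p ^ 3 * (p - 1) * ‖x‖ ^ (3 * p - 4) := by
  have hr : 0 < ‖x‖ := norm_pos_iff.mpr hx
  have hD : HasFDerivAt (fun y : E ↦ (ν * p) • ‖y‖ ^ (p - 2) • y) _ x :=
    (hasFDerivAt_norm_rpow_smul hx (p - 2)).const_smul (ν * p)
  rw [(gradient_const_mul_norm_rpow_eventuallyEq hx ν p).fderiv_eq, hD.fderiv,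
    (hasGradientAt_const_mul_norm_rpow hx ν p).gradient]
  simp only [smul_apply, add_apply, ContinuousLinearMap.id_apply,
    ContinuousLinearMap.smulRight_apply, innerSL_apply_apply,
    inner_add_left, inner_smul_left, inner_smul_right, real_inner_self_eq_norm_sq, smul_eq_mul,
    RCLike.conj_to_real]
  have h1 : ‖x‖ ^ (p - 2 - 2) * ‖x‖ ^ 2 = ‖x‖ ^ (p - 2) := by
    rw [← Real.rpow_natCast, ← Real.rpow_add hr]; norm_num
  have h2 : (‖x‖ ^ (p - 2)) ^ 3 * ‖x‖ ^ 2 = ‖x‖ ^ (3 * p - 4) := by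
    rw [← Real.rpow_natCast, ← Real.rpow_natCast, ← Real.rpow_mul hr.le, ← Real.rpow_add hr]
    norm_num; ring_nf
  linear_combination (ν ^ 3 * p ^ 3 * (p - 2) * (‖x‖ ^ (p - 2)) ^ 2 * ‖x‖ ^ 2) * h1
    + ν ^ 3 * p ^ 3 * (p - 1) * h2

end NormRpow

theorem infinityLaplacian_const_mul_norm_rpow {n : ℕ} {X : EuclideanSpace ℝ (Fin n)}
    (hX : X ≠ 0) (ν p : ℝ) :
    infinityLaplacian (fun Y ↦ ν * ‖Y‖ ^ p) X = ν ^ 3 * p ^ 3 * (p - 1) * ‖X‖ ^ (3 * p - 4) :=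
  inner_fderiv_gradient_const_mul_norm_rpow hX ν p

theorem sharpConstant_rpow_mul {γ : ℝ} (hγ : -1 < γ) (hγ3 : γ ≠ 3) :
    (((3 - γ) ^ 4 / (64 * (1 + γ))) ^ ((1 : ℝ) / (3 - γ))) ^ (3 - γ) *
      ((4 / (3 - γ)) ^ 3 * (4 / (3 - γ) - 1)) = 1 := by
  have hs : 3 - γ ≠ 0 := sub_ne_zero.mpr hγ3.symm
  have h1 : 1 + γ ≠ 0 := by linarith
  rw [← Real.rpow_mul (div_nonneg (by positivity) (by linarith)), one_div_mul_cancel hs,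
    Real.rpow_one]
  field_simp
  ring

theorem infinityLaplacian_const_mul_norm_rpow_eq_div_rpow_mul {n : ℕ} {γ μ τ : ℝ}
    (hγ3 : γ ≠ 3) (hμ : 0 < μ) (hτ : 0 < τ)
    (hτK : τ ^ (3 - γ) * ((4 / (3 - γ)) ^ 3 * (4 / (3 - γ) - 1)) = 1)
    {X : EuclideanSpace ℝ (Fin n)} (hX : X ≠ 0) :
    infinityLaplacian (fun Y ↦ μ * ‖Y‖ ^ (4 / (3 - γ))) X
      = (μ / τ) ^ (3 - γ) * (μ * ‖X‖ ^ (4 / (3 - γ))) ^ γ := by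
  have hs : 3 - γ ≠ 0 := sub_ne_zero.mpr hγ3.symm
  have hexp : 3 * (4 / (3 - γ)) - 4 = 4 / (3 - γ) * γ := by field_simp; ring
  have hμ3 : μ ^ 3 = μ ^ (3 - γ) * μ ^ γ := by
    rw [← Real.rpow_add hμ, sub_add_cancel, Real.rpow_ofNat]
  have hK : (4 / (3 - γ)) ^ 3 * (4 / (3 - γ) - 1) = (τ ^ (3 - γ))⁻¹ :=
    eq_inv_of_mul_eq_one_right hτK
  rw [infinityLaplacian_const_mul_norm_rpow hX, hexp, hμ3, Real.div_rpow hμ.le hτ.le,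
    div_eq_mul_inv (μ ^ (3 - γ)), ← hK, Real.mul_rpow hμ.le (by positivity),
    ← Real.rpow_mul (norm_nonneg X)]
  ring

theorem liouville_sharpness_trichotomy
    {n : ℕ} (γ μ τ : ℝ) (hγ0 : 0 ≤ γ) (hγ3 : γ < 3) (hμ : 0 < μ)
    (hτ : τ = ((3 - γ) ^ 4 / (64 * (1 + γ))) ^ ((1 : ℝ) / (3 - γ)))
    (h : EuclideanSpace ℝ (Fin n) → ℝ)
    (hh : ∀ X, h X = μ * ‖X‖ ^ (4 / (3 - γ))) :
    (μ > τ → ∀ X : EuclideanSpace ℝ (Fin n), X ≠ 0 →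
      infinityLaplacian h X > (h X) ^ γ) ∧
    (μ < τ → ∀ X : EuclideanSpace ℝ (Fin n), X ≠ 0 →
      infinityLaplacian h X < (h X) ^ γ) ∧
    (μ = τ → ∀ X : EuclideanSpace ℝ (Fin n), X ≠ 0 →
      infinityLaplacian h X = (h X) ^ γ) := by
  have hs : 0 < 3 - γ := by linarith
  have hτK := hτ ▸ sharpConstant_rpow_mul (by linarith) hγ3.ne
  have hτpos : 0 < τ := hτ ▸ by positivity
  obtain rfl : h = fun Y ↦ μ * ‖Y‖ ^ (4 / (3 - γ)) := funext hh
  have hLap (X : EuclideanSpace ℝ (Fin n)) (hX : X ≠ 0) :=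
    infinityLaplacian_const_mul_norm_rpow_eq_div_rpow_mul hγ3.ne hμ hτpos hτK hX
  have hpos (X : EuclideanSpace ℝ (Fin n)) (hX : X ≠ 0) :
      0 < (μ * ‖X‖ ^ (4 / (3 - γ))) ^ γ := by
    have := norm_pos_iff.mpr hX
    positivity
  refine ⟨fun hlt X hX ↦ ?_, fun hlt X hX ↦ ?_, fun heq X hX ↦ ?_⟩
  · rw [hLap X hX]
    exact lt_mul_of_one_lt_left (hpos X hX) (Real.one_lt_rpow ((one_lt_div hτpos).mpr hlt) hs)
  · rw [hLap X hX]
    exact mul_lt_of_lt_one_left (hpos X hX)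
      (Real.rpow_lt_one (by positivity) ((div_lt_one hτpos).mpr hlt) hs)
  · rw [hLap X hX, heq, div_self hτpos.ne', Real.one_rpow, one_mul]
end
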